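/- arXiv:2110.12922 — 3 statements merged into one kernel-verified Lean document; each statement's English description precedes it below -/
import Mathlib

section
/- Let F ∈ C^∞(ℝ^d, ℝ^p) with p ≤ d, U(x) = ‖F(x)‖², and let x ∈ F^{-1}(0) with JF(x) > 0. Let O(x) = (f₁(x), …, f_p(x)) be an orthonormal basis of ker(DF(x))^⊥ obtained from the rows of DF(x) by Gram–Schmidt, and define the normal Hessian ∇²_N U(x) = O(x)^⊤ ∇²U(x) O(x). Then det(∇²_N U(x)) = JF(x)², where JF(x) = det(DF(x) DF(x)^⊤)^{1/2}. -/
open Matrix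

theorem stmt5 (d p : ℕ) (hpd : p ≤ d)
    (F : EuclideanSpace ℝ (Fin d) → EuclideanSpace ℝ (Fin p)) (hF : ContDiff ℝ (⊤ : ℕ∞) F)
    (x : EuclideanSpace ℝ (Fin d)) (hx : F x = 0)
    (A : Matrix (Fin p) (Fin d) ℝ)
    (hA : ∀ i j, A i j = fderiv ℝ (fun y => F y i) x (EuclideanSpace.single j 1))
    (hJ : 0 < Real.sqrt ((A * Aᵀ).det))
    (T : Matrix (Fin p) (Fin p) ℝ) (hT : ∀ i j : Fin p, j < i → T i j = 0)
    (O : Matrix (Fin d) (Fin p) ℝ) (hO : O = Aᵀ * T) (hOrth : Oᵀ * O = 1) :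
    (Oᵀ * (Aᵀ * A) * O).det = Real.sqrt ((A * Aᵀ).det) ^ 2 := by
  have hM : 0 < (A * Aᵀ).det := Real.sqrt_pos.mp hJ
  subst hO
  have key : (Tᵀ * ((A * Aᵀ) * T)).det = 1 := by
    rw [show Tᵀ * ((A * Aᵀ) * T) = (Aᵀ * T)ᵀ * (Aᵀ * T) by
      simp [Matrix.transpose_mul, Matrix.mul_assoc], hOrth, Matrix.det_one]
  have k2 : T.det * ((A * Aᵀ).det * T.det) = 1 := by
    simpa [Matrix.det_mul, Matrix.det_transpose] using key
  have hgoal : ((Aᵀ * T)ᵀ * (Aᵀ * A) * (Aᵀ * T)).det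
      = T.det * ((A * Aᵀ).det * ((A * Aᵀ).det * T.det)) := by
    rw [show (Aᵀ * T)ᵀ * (Aᵀ * A) * (Aᵀ * T)
        = Tᵀ * ((A * Aᵀ) * ((A * Aᵀ) * T)) by
      simp [Matrix.transpose_mul, Matrix.mul_assoc]]
    simp [Matrix.det_mul, Matrix.det_transpose]
  rw [hgoal, Real.sq_sqrt hM.le]
  nlinarith [k2]
end

section
/- Let F : ℝ → ℝ² be given by F(x) = ((1−x²)/(1+x²), x(1−x²)/(1+x²)). Then F^{-1}((0,0)) = {−1, 1}, so the 0-dimensional Hausdorff measure ℋ⁰(F^{-1}(0,0)) = 2, while for all t in a punctured neighborhood of (0,0) in the image curve F(ℝ), ℋ⁰(F^{-1}(t)) ≤ 1. In particular the map t ↦ ℋ⁰(F^{-1}(t)) is not continuous at t = 0. -/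
open MeasureTheory

theorem stmt12 (F : ℝ → ℝ × ℝ)
    (hF : ∀ x, F x = ((1 - x ^ 2) / (1 + x ^ 2), x * (1 - x ^ 2) / (1 + x ^ 2))) :
    F ⁻¹' {((0 : ℝ), (0 : ℝ))} = {-1, 1} ∧
    μH[0] (F ⁻¹' {((0 : ℝ), (0 : ℝ))}) = 2 ∧
    ∃ ε > 0, ∀ t ∈ Set.range F, t ≠ ((0 : ℝ), (0 : ℝ)) →
      dist t ((0 : ℝ), (0 : ℝ)) < ε → μH[0] (F ⁻¹' {t}) ≤ 1 := by
  have hpos : ∀ x : ℝ, (0:ℝ) < 1 + x ^ 2 := fun x => by positivity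
  have h1 : F ⁻¹' {((0 : ℝ), (0 : ℝ))} = {-1, 1} := by
    ext x
    simp only [Set.mem_preimage, Set.mem_singleton_iff, hF, Prod.mk.injEq,
      Set.mem_insert_iff, Set.mem_singleton_iff]
    constructor
    · rintro ⟨h, -⟩
      have hne := (hpos x).ne'
      have : 1 - x ^ 2 = 0 := by
        field_simp at h; linarith
      have : x ^ 2 = 1 := by linarith
      rcases mul_self_eq_one_iff.mp (by nlinarith : x * x = 1) with h | h
      · right; exact h
      · left; exact h
    · rintro (rfl | rfl) <;> norm_num
  refine ⟨h1, ?_, ?_⟩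
  · rw [h1]
    have hd : Disjoint ({-1} : Set ℝ) {1} := by
      norm_num [Set.disjoint_singleton_left]
    have : ({-1, 1} : Set ℝ) = {-1} ∪ {1} := rfl
    rw [this, measure_union hd (measurableSet_singleton 1),
      MeasureTheory.Measure.hausdorffMeasure_zero_singleton,
      MeasureTheory.Measure.hausdorffMeasure_zero_singleton]
    norm_num
  · refine ⟨1, one_pos, fun t ht hne _ => ?_⟩
    obtain ⟨a, rfl⟩ := ht
    have ha1 : (1 - a ^ 2) / (1 + a ^ 2) ≠ 0 := by
      intro h0
      apply hne
      have : 1 - a ^ 2 = 0 := by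
        field_simp at h0; linarith
      rw [hF]
      simp [this]
    have hsub : F ⁻¹' {F a} ⊆ {(F a).2 / (F a).1} := by
      intro x hx
      simp only [Set.mem_preimage, Set.mem_singleton_iff] at hx ⊢
      have hx1 : (F a).1 = (1 - x ^ 2) / (1 + x ^ 2) := by rw [← hx, hF]
      have hx2 : (F a).2 = x * (1 - x ^ 2) / (1 + x ^ 2) := by rw [← hx, hF]
      have : (F a).2 = x * (F a).1 := by rw [hx1, hx2]; ring
      rw [this, mul_div_assoc, div_self, mul_one]
      rw [hF]; exact ha1
    calc μH[0] (F ⁻¹' {F a}) ≤ μH[0] ({(F a).2 / (F a).1} : Set ℝ) := measure_mono hsub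
      _ = 1 := MeasureTheory.Measure.hausdorffMeasure_zero_singleton _
end

section
/- Let F ∈ C¹(ℝ^d, ℝ^p) with d ≤ p and let x₀ ∈ ℝ^d with JF(x₀) = det(DF(x₀)^⊤ DF(x₀))^{1/2} > 0. Set H(x,y) = DF(x)^⊤ DF(y) and let m > 0 be such that v^⊤ H(x₀,x₀) v ≥ m‖v‖² for all v ∈ ℝ^d. Suppose W ⊂ ℝ^d is a convex set containing x₀ such that ‖H(x,y) − H(x₀,x₀)‖₂ ≤ m/2 for all x, y ∈ W. Then for all x, y ∈ W, ‖F(x) − F(y)‖² ≥ (m/2)‖y − x‖², i.e. F is (m/2)^{1/2}-bi-Lipschitz from below on W. -/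
/-!
With `v = y - x` and `γ t = x + t • v`, the fundamental theorem of calculus gives
`F y - F x = ∫₀¹ DF(γ t) v dt`, hence `‖F y - F x‖² = ∫₀¹∫₀¹ vᵀ H(γ t, γ s) v ds dt`.
Since `γ` stays in the convex set `W`, each integrand is at least
`vᵀ H(x₀, x₀) v - ‖(H(γ t, γ s) - H(x₀, x₀)) v‖ ‖v‖ ≥ m ‖v‖² - (m / 2) ‖v‖²`.
-/

open Matrix MeasureTheory
open scoped RealInnerProductSpace

theorem le_dotProduct_mulVec_of_norm_sub_mulVec_le {n : Type*} [Fintype n]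
    {M M₀ : Matrix n n ℝ} {m : ℝ} {v : n → ℝ} (hM₀ : m * ∑ i, v i ^ 2 ≤ v ⬝ᵥ (M₀ *ᵥ v))
    (hsub : √(∑ i, ((M - M₀) *ᵥ v) i ^ 2) ≤ m / 2 * √(∑ i, v i ^ 2)) :
    m / 2 * ∑ i, v i ^ 2 ≤ v ⬝ᵥ (M *ᵥ v) := by
  have hsplit : v ⬝ᵥ (M *ᵥ v) = v ⬝ᵥ (M₀ *ᵥ v) + v ⬝ᵥ ((M - M₀) *ᵥ v) := by
    rw [sub_mulVec, dotProduct_sub]; ring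
  have hperturb : -(v ⬝ᵥ ((M - M₀) *ᵥ v)) ≤ m / 2 * ∑ i, v i ^ 2 :=
    calc -(v ⬝ᵥ ((M - M₀) *ᵥ v))
        ≤ √(∑ i, v i ^ 2) * √(∑ i, ((M - M₀) *ᵥ v) i ^ 2) := by
          simpa [dotProduct] using
            Real.sum_mul_le_sqrt_mul_sqrt Finset.univ (-v) ((M - M₀) *ᵥ v)
      _ ≤ √(∑ i, v i ^ 2) * (m / 2 * √(∑ i, v i ^ 2)) := by gcongr
      _ = m / 2 * ∑ i, v i ^ 2 := by
          rw [mul_left_comm, Real.mul_self_sqrt (Finset.sum_nonneg fun i _ => sq_nonneg (v i))]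
  linarith

theorem inner_toLp_mulVec_toLp_mulVec {ι κ : Type*} [Fintype ι] [Fintype κ]
    (A B : Matrix κ ι ℝ) (v : ι → ℝ) :
    ⟪WithLp.toLp 2 (A *ᵥ v), WithLp.toLp 2 (B *ᵥ v)⟫ = v ⬝ᵥ ((Aᵀ * B) *ᵥ v) := by
  rw [EuclideanSpace.inner_toLp_toLp, star_trivial, dotProduct_comm, ← mulVec_mulVec,
    dotProduct_mulVec v Aᵀ, vecMul_transpose]

theorem fderiv_apply_eq_toLp_mulVec {ι κ : Type*} [Fintype ι] [DecidableEq ι] [Fintype κ]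
    {F : EuclideanSpace ℝ ι → EuclideanSpace ℝ κ} {z : EuclideanSpace ℝ ι}
    (hF : DifferentiableAt ℝ F z) {A : Matrix κ ι ℝ}
    (hA : ∀ i j, A i j = fderiv ℝ (fun y => F y i) z (EuclideanSpace.single j 1))
    (v : EuclideanSpace ℝ ι) :
    fderiv ℝ F z v = WithLp.toLp 2 (A *ᵥ WithLp.ofLp v) := by
  have hcoord : ∀ i,
      fderiv ℝ (fun y => F y i) z = (EuclideanSpace.proj i).comp (fderiv ℝ F z) :=
    fun i => ((EuclideanSpace.proj (𝕜 := ℝ) i).hasFDerivAt.comp z hF.hasFDerivAt).fderiv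
  have hv : v = ∑ j, v j • EuclideanSpace.single j (1 : ℝ) := by
    ext k
    simp [Pi.single_apply]
  ext i
  conv_lhs => rw [hv]
  simp [hA, hcoord, mulVec, dotProduct, mul_comm]

theorem sub_eq_integral_fderiv_segment {E G : Type*} [NormedAddCommGroup E] [NormedSpace ℝ E]
    [NormedAddCommGroup G] [NormedSpace ℝ G] [CompleteSpace G] {f : E → G}
    (hf : ContDiff ℝ 1 f) (x y : E) :
    f y - f x = ∫ t in (0 : ℝ)..1, fderiv ℝ f (x + t • (y - x)) (y - x) := by
  have hderiv : ∀ t : ℝ, HasDerivAt (fun t => f (x + t • (y - x)))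
      (fderiv ℝ f (x + t • (y - x)) (y - x)) t := fun t => by
    have hsegment : HasDerivAt (fun t : ℝ => x + t • (y - x)) (y - x) t := by
      simpa using ((hasDerivAt_id t).smul_const (y - x)).const_add x
    exact (hf.differentiable one_ne_zero _).hasFDerivAt.comp_hasDerivAt t hsegment
  have hcont : Continuous fun t : ℝ => fderiv ℝ f (x + t • (y - x)) (y - x) := by fun_prop
  rw [intervalIntegral.integral_eq_sub_of_hasDerivAt (fun t _ => hderiv t)
    (hcont.intervalIntegrable 0 1)]
  simp

theorem mul_measureReal_univ_sq_le_norm_integral_sq {α E : Type*} [MeasurableSpace α]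
    [NormedAddCommGroup E] [InnerProductSpace ℝ E] [CompleteSpace E] {μ : Measure α}
    [IsFiniteMeasure μ] {φ : α → E} (hφ : Integrable φ μ) {c : ℝ}
    (h : ∀ᵐ s ∂μ, ∀ᵐ t ∂μ, c ≤ ⟪φ s, φ t⟫) :
    c * μ.real Set.univ ^ 2 ≤ ‖∫ t, φ t ∂μ‖ ^ 2 := by
  have hinner : ∀ᵐ s ∂μ, c * μ.real Set.univ ≤ ⟪∫ t, φ t ∂μ, φ s⟫ := by
    filter_upwards [h] with s hs
    have := integral_mono_ae (integrable_const c) (hφ.const_inner (φ s)) hs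
    simpa [integral_inner hφ, real_inner_comm, mul_comm] using this
  calc c * μ.real Set.univ ^ 2 = ∫ _, c * μ.real Set.univ ∂μ := by
        simp only [integral_const, smul_eq_mul]; ring
    _ ≤ ∫ s, ⟪∫ t, φ t ∂μ, φ s⟫ ∂μ :=
        integral_mono_ae (integrable_const _) (hφ.const_inner _) hinner
    _ = ‖∫ t, φ t ∂μ‖ ^ 2 := by rw [integral_inner hφ, real_inner_self_eq_norm_sq]

theorem stmt14_general (d p : ℕ)
    (F : EuclideanSpace ℝ (Fin d) → EuclideanSpace ℝ (Fin p)) (hF : ContDiff ℝ 1 F)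
    (DF : EuclideanSpace ℝ (Fin d) → Matrix (Fin p) (Fin d) ℝ)
    (hDF : ∀ x i j, DF x i j = fderiv ℝ (fun y => F y i) x (EuclideanSpace.single j 1))
    (x₀ : EuclideanSpace ℝ (Fin d))
    (H : EuclideanSpace ℝ (Fin d) → EuclideanSpace ℝ (Fin d) → Matrix (Fin d) (Fin d) ℝ)
    (hH : ∀ x y, H x y = (DF x)ᵀ * DF y)
    (m : ℝ)
    (hcoerc : ∀ v : Fin d → ℝ, m * ∑ i, v i ^ 2 ≤ v ⬝ᵥ (H x₀ x₀ *ᵥ v))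
    (W : Set (EuclideanSpace ℝ (Fin d))) (hconv : Convex ℝ W)
    (hclose : ∀ x ∈ W, ∀ y ∈ W, ∀ v : Fin d → ℝ,
      Real.sqrt (∑ i, ((H x y - H x₀ x₀) *ᵥ v) i ^ 2) ≤ (m / 2) * Real.sqrt (∑ i, v i ^ 2)) :
    ∀ x ∈ W, ∀ y ∈ W, (m / 2) * ‖y - x‖ ^ 2 ≤ ‖F x - F y‖ ^ 2 := by
  intro x hx y hy
  have hsegment : ∀ t ∈ Set.Ioc (0 : ℝ) 1, x + t • (y - x) ∈ W := fun t ht =>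
    hconv.add_smul_sub_mem hx hy ⟨ht.1.le, ht.2⟩
  have hbound : ∀ a ∈ W, ∀ b ∈ W,
      m / 2 * ‖y - x‖ ^ 2 ≤ ⟪fderiv ℝ F a (y - x), fderiv ℝ F b (y - x)⟫ := by
    intro a ha b hb
    rw [fderiv_apply_eq_toLp_mulVec (hF.differentiable one_ne_zero a) (hDF a),
      fderiv_apply_eq_toLp_mulVec (hF.differentiable one_ne_zero b) (hDF b),
      inner_toLp_mulVec_toLp_mulVec, ← hH, EuclideanSpace.real_norm_sq_eq]
    exact le_dotProduct_mulVec_of_norm_sub_mulVec_le (hcoerc _) (hclose a ha b hb _)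
  have hcont : Continuous fun t : ℝ => fderiv ℝ F (x + t • (y - x)) (y - x) := by fun_prop
  have hIoc :=
    mul_measureReal_univ_sq_le_norm_integral_sq (hcont.integrableOn_Ioc (μ := volume))
    (ae_restrict_of_forall_mem measurableSet_Ioc fun s hs =>
      ae_restrict_of_forall_mem measurableSet_Ioc fun t ht =>
        hbound _ (hsegment s hs) _ (hsegment t ht))
  rw [norm_sub_rev (F x), sub_eq_integral_fderiv_segment hF,
    intervalIntegral.integral_of_le zero_le_one]
  simpa using hIoc

theorem stmt14 (d p : ℕ) (hdp : d ≤ p)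
    (F : EuclideanSpace ℝ (Fin d) → EuclideanSpace ℝ (Fin p)) (hF : ContDiff ℝ 1 F)
    (DF : EuclideanSpace ℝ (Fin d) → Matrix (Fin p) (Fin d) ℝ)
    (hDF : ∀ x i j, DF x i j = fderiv ℝ (fun y => F y i) x (EuclideanSpace.single j 1))
    (x₀ : EuclideanSpace ℝ (Fin d))
    (hJ : 0 < Real.sqrt (((DF x₀)ᵀ * DF x₀).det))
    (H : EuclideanSpace ℝ (Fin d) → EuclideanSpace ℝ (Fin d) → Matrix (Fin d) (Fin d) ℝ)
    (hH : ∀ x y, H x y = (DF x)ᵀ * DF y)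
    (m : ℝ) (hm : 0 < m)
    (hcoerc : ∀ v : Fin d → ℝ, m * ∑ i, v i ^ 2 ≤ v ⬝ᵥ (H x₀ x₀ *ᵥ v))
    (W : Set (EuclideanSpace ℝ (Fin d))) (hconv : Convex ℝ W) (hx₀ : x₀ ∈ W)
    (hclose : ∀ x ∈ W, ∀ y ∈ W, ∀ v : Fin d → ℝ,
      Real.sqrt (∑ i, ((H x y - H x₀ x₀) *ᵥ v) i ^ 2) ≤ (m / 2) * Real.sqrt (∑ i, v i ^ 2)) :
    ∀ x ∈ W, ∀ y ∈ W, (m / 2) * ‖y - x‖ ^ 2 ≤ ‖F x - F y‖ ^ 2 :=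
  stmt14_general d p F hF DF hDF x₀ H hH m hcoerc W hconv hclose
end
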